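/- arXiv:2508.02299 — 2 statements merged into one kernel-verified Lean document; each statement's English description precedes it below -/
import Mathlib

section
/- Let E be a real inner product space, N a positive integer, and F_1, …, F_N : E → ℝ differentiable functions. Let x, y ∈ E and let c ≥ 0, t ≥ 0 be given. If F_i(y) ≤ F_i(x) − c‖∇F_i(x)‖² + t holds for every i = 1, …, N, then the average F = (1/N)·Σ_{i=1}^N F_i satisfies F(y) ≤ F(x) − c‖∇F(x)‖² + t. -/
open InnerProductSpace

/-- Deterministic core of Lemma 2: if the Armijo-type decrease condition
`Fᵢ(y) ≤ Fᵢ(x) - c‖∇Fᵢ(x)‖² + t` holds for every `i`, then the same decrease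
condition holds for the average `F = (1/N) ∑ᵢ Fᵢ`. -/
theorem average_decrease {E : Type*} [NormedAddCommGroup E] [InnerProductSpace ℝ E]
    [CompleteSpace E]
    (N : ℕ) (hN : 0 < N) (F : Fin N → E → ℝ) (hF : ∀ i, Differentiable ℝ (F i))
    (x y : E) (c t : ℝ) (hc : 0 ≤ c) (ht : 0 ≤ t)
    (hdec : ∀ i, F i y ≤ F i x - c * ‖gradient (F i) x‖ ^ 2 + t) :
    (1 / N : ℝ) * ∑ i, F i y
      ≤ (1 / N : ℝ) * ∑ i, F i x
        - c * ‖gradient (fun z => (1 / N : ℝ) * ∑ i, F i z) x‖ ^ 2 + t := by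
  have hNpos : (0:ℝ) < N := by exact_mod_cast hN
  -- gradient of the average
  have hgrad : gradient (fun z => (1 / N : ℝ) * ∑ i, F i z) x
      = (1 / N : ℝ) • ∑ i, gradient (F i) x := by
    have hfd : HasFDerivAt (fun z => (1 / N : ℝ) * ∑ i, F i z)
        ((1 / N : ℝ) • ∑ i, fderiv ℝ (F i) x) x := by
      have : HasFDerivAt (fun z => ∑ i, F i z) (∑ i, fderiv ℝ (F i) x) x :=
        HasFDerivAt.fun_sum fun i _ => ((hF i).differentiableAt).hasFDerivAt
      exact this.const_smul (1 / N : ℝ)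
    have := hfd.hasGradientAt
    rw [this.gradient]
    simp [gradient, map_smul, map_sum]
  rw [hgrad]
  -- norm bound: ‖(1/N) • ∑ gᵢ‖² ≤ (1/N) ∑ ‖gᵢ‖²
  set g : Fin N → E := fun i => gradient (F i) x with hg
  have hnorm : ‖(1 / N : ℝ) • ∑ i, g i‖ ^ 2 ≤ (1 / N : ℝ) * ∑ i, ‖g i‖ ^ 2 := by
    have h1 : ‖(1 / N : ℝ) • ∑ i, g i‖ ^ 2 = (1 / N : ℝ)^2 * ‖∑ i, g i‖ ^ 2 := by
      rw [norm_smul]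
      simp [mul_pow, abs_of_nonneg (by positivity : (0:ℝ) ≤ 1 / N)]
    have h2 : ‖∑ i, g i‖ ^ 2 ≤ (N : ℝ) * ∑ i, ‖g i‖ ^ 2 := by
      calc ‖∑ i, g i‖ ^ 2 ≤ (∑ i, ‖g i‖) ^ 2 := by
            have := norm_sum_le Finset.univ g
            exact pow_le_pow_left₀ (norm_nonneg _) this 2
        _ ≤ (Finset.univ : Finset (Fin N)).card * ∑ i, ‖g i‖ ^ 2 := by
            simpa using sq_sum_le_card_mul_sum_sq
              (s := (Finset.univ : Finset (Fin N))) (f := fun i => ‖g i‖)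
        _ = (N : ℝ) * ∑ i, ‖g i‖ ^ 2 := by simp
    calc ‖(1 / N : ℝ) • ∑ i, g i‖ ^ 2 = (1 / N : ℝ)^2 * ‖∑ i, g i‖ ^ 2 := h1
      _ ≤ (1 / N : ℝ)^2 * ((N : ℝ) * ∑ i, ‖g i‖ ^ 2) := by
          exact mul_le_mul_of_nonneg_left h2 (by positivity)
      _ = (1 / N : ℝ) * ∑ i, ‖g i‖ ^ 2 := by field_simp
  -- sum the hypotheses
  have hsum : ∑ i, F i y ≤ ∑ i, (F i x - c * ‖g i‖ ^ 2 + t) :=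
    Finset.sum_le_sum fun i _ => hdec i
  have hsum' : (1 / N : ℝ) * ∑ i, F i y
      ≤ (1 / N : ℝ) * ∑ i, F i x - c * ((1 / N : ℝ) * ∑ i, ‖g i‖ ^ 2) + t := by
    have := mul_le_mul_of_nonneg_left hsum (by positivity : (0:ℝ) ≤ 1 / N)
    rw [Finset.sum_add_distrib, Finset.sum_sub_distrib] at this
    simp only [Finset.sum_const, Finset.card_univ, Fintype.card_fin, nsmul_eq_mul] at this
    calc (1 / N : ℝ) * ∑ i, F i y ≤ _ := this
      _ = (1 / N : ℝ) * ∑ i, F i x - c * ((1 / N : ℝ) * ∑ i, ‖g i‖ ^ 2) + t := by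
          rw [← Finset.mul_sum]
          field_simp
  refine hsum'.trans ?_
  have : c * ‖(1 / N : ℝ) • ∑ i, g i‖ ^ 2 ≤ c * ((1 / N : ℝ) * ∑ i, ‖g i‖ ^ 2) :=
    mul_le_mul_of_nonneg_left hnorm hc
  linarith
end

section
/- Let f : ℝⁿ → ℝ and h : ℝⁿ → ℝᵐ be continuously differentiable, let (x_k) be a sequence in ℝⁿ with x_k → x*, let (μ_k) be positive reals, and set g_k = ∇f(x_k) + μ_k·(Dh(x_k))* h(x_k) and λ_k = μ_k·h(x_k). Suppose g_k → 0, that Dh(x*)∘(Dh(x*))* is invertible, and that for all sufficiently large k the operator Dh(x_k)∘(Dh(x_k))* is invertible so that λ_k = (Dh(x_k)∘(Dh(x_k))*)⁻¹ (Dh(x_k)(g_k − ∇f(x_k))). Then λ_k → λ* := −(Dh(x*)∘(Dh(x*))*)⁻¹ (Dh(x*) ∇f(x*)), and consequently ∇f(x*) + (Dh(x*))* λ* = 0. -/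
open Filter ContinuousLinearMap


private lemma tendsto_clm_apply' {𝕜 E F α : Type*} [NontriviallyNormedField 𝕜]
    [NormedAddCommGroup E] [NormedSpace 𝕜 E] [NormedAddCommGroup F] [NormedSpace 𝕜 F]
    {l : Filter α} {A : α → (E →L[𝕜] F)} {v : α → E} {A₀ : E →L[𝕜] F} {v₀ : E}
    (hA : Filter.Tendsto A l (nhds A₀)) (hv : Filter.Tendsto v l (nhds v₀)) :
    Filter.Tendsto (fun k => A k (v k)) l (nhds (A₀ v₀)) :=
  ((isBoundedBilinearMap_apply.continuous.tendsto (A₀, v₀)).comp (hA.prodMk_nhds hv))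

/-- Multiplier-convergence step (equations (10)–(12)) in the proof of Theorem 2:
along `x_k → x*` with vanishing penalty gradients `g_k`, the estimated Lagrange
multipliers `λ_k = μ_k h(x_k)`, given (for large `k`) by
`λ_k = (Dh(x_k) Dh(x_k)*)⁻¹ (Dh(x_k)(g_k - ∇f(x_k)))`, converge to
`λ* = -(Dh(x*) Dh(x*)*)⁻¹ (Dh(x*) ∇f(x*))`, and `∇f(x*) + (Dh(x*))* λ* = 0`. -/
theorem multiplier_convergence {n m : ℕ}
    (f : EuclideanSpace ℝ (Fin n) → ℝ)
    (h : EuclideanSpace ℝ (Fin n) → EuclideanSpace ℝ (Fin m))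
    (hf : ContDiff ℝ 1 f) (hh : ContDiff ℝ 1 h)
    (x : ℕ → EuclideanSpace ℝ (Fin n)) (xstar : EuclideanSpace ℝ (Fin n))
    (hx : Tendsto x atTop (nhds xstar))
    (μ : ℕ → ℝ) (hμpos : ∀ k, 0 < μ k)
    (g : ℕ → EuclideanSpace ℝ (Fin n)) (lam : ℕ → EuclideanSpace ℝ (Fin m))
    (hg : ∀ k, g k = gradient f (x k)
      + μ k • ContinuousLinearMap.adjoint (fderiv ℝ h (x k)) (h (x k)))
    (hlam : ∀ k, lam k = μ k • h (x k))
    (hg0 : Tendsto g atTop (nhds 0))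
    (hstar : IsUnit ((fderiv ℝ h xstar) ∘L ContinuousLinearMap.adjoint (fderiv ℝ h xstar)))
    (hinv : ∀ᶠ k in atTop,
      IsUnit ((fderiv ℝ h (x k)) ∘L ContinuousLinearMap.adjoint (fderiv ℝ h (x k))) ∧
      lam k = Ring.inverse ((fderiv ℝ h (x k)) ∘L ContinuousLinearMap.adjoint (fderiv ℝ h (x k)))
        ((fderiv ℝ h (x k)) (g k - gradient f (x k)))) :
    Tendsto lam atTop (nhds
        (-(Ring.inverse ((fderiv ℝ h xstar) ∘L ContinuousLinearMap.adjoint (fderiv ℝ h xstar))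
          ((fderiv ℝ h xstar) (gradient f xstar))))) ∧
      gradient f xstar + ContinuousLinearMap.adjoint (fderiv ℝ h xstar)
        (-(Ring.inverse ((fderiv ℝ h xstar) ∘L ContinuousLinearMap.adjoint (fderiv ℝ h xstar))
          ((fderiv ℝ h xstar) (gradient f xstar)))) = 0 := by

  -- notation
  set D : EuclideanSpace ℝ (Fin n) → (EuclideanSpace ℝ (Fin n) →L[ℝ] EuclideanSpace ℝ (Fin m)) :=
    fun y => fderiv ℝ h y with hD
  have hDcont : Continuous D := hh.continuous_fderiv one_ne_zero
  have hadjcont : Continuous fun y => ContinuousLinearMap.adjoint (D y) :=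
    (ContinuousLinearMap.adjoint.toContinuousLinearEquiv :
      (EuclideanSpace ℝ (Fin n) →L[ℝ] EuclideanSpace ℝ (Fin m)) ≃L[ℝ] _).continuous.comp hDcont
  have hTcont : Continuous fun y => (D y) ∘L ContinuousLinearMap.adjoint (D y) :=
    hDcont.clm_comp hadjcont
  have hgradcont : Continuous (gradient f) := by
    have h1 : Continuous (fderiv ℝ f) := hf.continuous_fderiv one_ne_zero
    have : gradient f = fun y => (InnerProductSpace.toDual ℝ _).symm (fderiv ℝ f y) := rfl
    rw [this]
    exact (InnerProductSpace.toDual ℝ _).symm.continuous.comp h1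
  -- limit of the inverse
  obtain ⟨u, hu⟩ := hstar
  have hinvcont : Tendsto (fun k => Ring.inverse ((D (x k)) ∘L ContinuousLinearMap.adjoint (D (x k))))
      atTop (nhds (Ring.inverse ((D xstar) ∘L ContinuousLinearMap.adjoint (D xstar)))) := by
    have hc : ContinuousAt Ring.inverse ((D xstar) ∘L ContinuousLinearMap.adjoint (D xstar)) := by
      rw [← hu]; exact NormedRing.inverse_continuousAt u
    exact hc.tendsto.comp ((hTcont.tendsto xstar).comp hx)
  -- limit of the argument
  have hgrad : Tendsto (fun k => gradient f (x k)) atTop (nhds (gradient f xstar)) :=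
    (hgradcont.tendsto xstar).comp hx
  have harg : Tendsto (fun k => (D (x k)) (g k - gradient f (x k))) atTop
      (nhds ((D xstar) (0 - gradient f xstar))) :=
    tendsto_clm_apply' ((hDcont.tendsto xstar).comp hx) (hg0.sub hgrad)
  have hmain : Tendsto lam atTop
      (nhds (-(Ring.inverse ((D xstar) ∘L ContinuousLinearMap.adjoint (D xstar))
        ((D xstar) (gradient f xstar))))) := by
    have hlim := tendsto_clm_apply' hinvcont harg
    have heq : Ring.inverse ((D xstar) ∘L ContinuousLinearMap.adjoint (D xstar))
        ((D xstar) (0 - gradient f xstar))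
        = -(Ring.inverse ((D xstar) ∘L ContinuousLinearMap.adjoint (D xstar))
          ((D xstar) (gradient f xstar))) := by
      rw [zero_sub, map_neg, map_neg]
    rw [heq] at hlim
    refine hlim.congr' ?_
    filter_upwards [hinv] with k hk
    exact hk.2.symm
  refine ⟨hmain, ?_⟩
  -- second part: adjoint (D (x k)) (lam k) = g k - gradient f (x k)
  have hrel : ∀ k, ContinuousLinearMap.adjoint (D (x k)) (lam k) = g k - gradient f (x k) := by
    intro k
    rw [hlam, map_smul, hg]
    simp
    rfl
  have hL : Tendsto (fun k => ContinuousLinearMap.adjoint (D (x k)) (lam k)) atTop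
      (nhds (ContinuousLinearMap.adjoint (D xstar)
        (-(Ring.inverse ((D xstar) ∘L ContinuousLinearMap.adjoint (D xstar))
          ((D xstar) (gradient f xstar)))))) :=
    tendsto_clm_apply' ((hadjcont.tendsto xstar).comp hx) hmain
  have hR : Tendsto (fun k => g k - gradient f (x k)) atTop (nhds (0 - gradient f xstar)) :=
    hg0.sub hgrad
  have := tendsto_nhds_unique ((hL.congr (fun k => hrel k))) hR
  rw [this, zero_sub, add_neg_cancel]
end
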